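/- Let (b,c,d) be a triad in the real Cayley–Dickson algebra 𝔸ₙ (all εᵢ = 1) satisfying the Moufang identity (d·b)·(c·d) = (d·(b·c))·d. If moreover ((b·c)·d)·b + (b·c)·(d·b) = 0 (Mal'cev's simplified identity for the triad), then [b,c,d] ≠ 0; if instead ((b·c)·d)·b − (b·c)·(d·b) = 0, then [b,c,d] = 0. -/

import Mathlib

noncomputable section

/-- The real Cayley–Dickson algebra carrier: `CD 0 = ℝ`, `CD (n+1) = CD n × CD n`. -/
def CD : ℕ → Type
  | 0 => ℝ
  | n + 1 => CD n × CD n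

instance CD.instAddCommGroup : (n : ℕ) → AddCommGroup (CD n)
  | 0 => inferInstanceAs (AddCommGroup ℝ)
  | n + 1 =>
    letI := CD.instAddCommGroup n
    inferInstanceAs (AddCommGroup (CD n × CD n))

instance CD.instModule : (n : ℕ) → Module ℝ (CD n)
  | 0 => inferInstanceAs (Module ℝ ℝ)
  | n + 1 =>
    letI := CD.instModule n
    inferInstanceAs (Module ℝ (CD n × CD n))

/-- The unit of the Cayley–Dickson algebra. -/
def CD.one : (n : ℕ) → CD n
  | 0 => (1 : ℝ)
  | n + 1 => (CD.one n, 0)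

/-- Conjugation: `(a, b)* = (a*, -b)`, identity on `ℝ`. -/
def CD.conj : (n : ℕ) → CD n → CD n
  | 0, a => a
  | n + 1, x => (CD.conj n x.1, -x.2)

/-- Cayley–Dickson multiplication with sign vector `ε`:
`(a,b)·(c,d) = (a·c − ε (n+1) • (d*·b), d·a + b·c*)`. -/
def CD.mul (ε : ℕ → ℝ) : (n : ℕ) → CD n → CD n → CD n
  | 0, a, c => (show ℝ from a) * (show ℝ from c)
  | n + 1, x, y =>
    (CD.mul ε n x.1 y.1 - ε (n + 1) • CD.mul ε n (CD.conj n y.2) x.2,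
     CD.mul ε n y.2 x.1 + CD.mul ε n x.2 (CD.conj n y.1))

/-- The standard basis element `e α` of `CD n`, for `α ⊆ {1,…,n}`. -/
def CD.basis : (n : ℕ) → Finset ℕ → CD n
  | 0, _ => (1 : ℝ)
  | n + 1, α =>
    if n + 1 ∈ α then ((0 : CD n), CD.basis n (α.erase (n + 1)))
    else (CD.basis n α, (0 : CD n))

/-- `α` indexes a pure basis element of `CD n`. -/
def CD.IsPure (n : ℕ) (α : Finset ℕ) : Prop :=
  α.Nonempty ∧ α ⊆ Finset.Icc 1 n

/-- The associator `[x,y,z] = (x·y)·z − x·(y·z)`. -/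
def CD.assoc (ε : ℕ → ℝ) (n : ℕ) (x y z : CD n) : CD n :=
  CD.mul ε n (CD.mul ε n x y) z - CD.mul ε n x (CD.mul ε n y z)

/-- A triad: indices of three pairwise distinct pure basis elements `b, c, d`
with `d ≠ ±(b·c)` (all signs `εᵢ = 1`). -/
def CD.IsTriad (n : ℕ) (α β γ : Finset ℕ) : Prop :=
  CD.IsPure n α ∧ CD.IsPure n β ∧ CD.IsPure n γ ∧
  α ≠ β ∧ α ≠ γ ∧ β ≠ γ ∧
  CD.basis n γ ≠ CD.mul (fun _ => 1) n (CD.basis n α) (CD.basis n β) ∧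
  CD.basis n γ ≠ -CD.mul (fun _ => 1) n (CD.basis n α) (CD.basis n β)

/-- Multiplication with all signs `εᵢ = 1`. -/
abbrev CD.mul1 (n : ℕ) : CD n → CD n → CD n := CD.mul (fun _ => 1) n

/-- Associator with all signs `εᵢ = 1`. -/
abbrev CD.assoc1 (n : ℕ) : CD n → CD n → CD n → CD n := CD.assoc (fun _ => 1) n

/-!
Signed basis elements `±e_S` multiply like `±e_{S ∆ T}`; a pure one `x` satisfies
`x (x y) = -y = (y x) x`, and two distinct pure ones anticommute. For a triad these rules collapse
the Moufang identity to `(d b)(c d) = b c`, whence `(b c)(d b) = c d`; likewise `(b (c d)) b = c d`.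
Since `(b c) d` and `b (c d)` are both `±e_{α ∆ β ∆ γ}`, either they are equal, and then Mal'cev's
sum is `2 c d ≠ 0`, or they are opposite, and then the associator is nonzero while Mal'cev's
difference is `-2 c d ≠ 0`.
-/

theorem Finset.erase_symmDiff {ι : Type*} [DecidableEq ι] (S T : Finset ι) (a : ι) :
    (symmDiff S T).erase a = symmDiff (S.erase a) (T.erase a) := by
  ext i
  by_cases hi : i = a <;> simp [Finset.mem_symmDiff, hi]

namespace CD

variable {ε : ℕ → ℝ} {n : ℕ}

theorem ext {x y : CD (n + 1)} (h₁ : x.1 = y.1) (h₂ : x.2 = y.2) : x = y :=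
  Prod.ext h₁ h₂

theorem ext_iff {x y : CD (n + 1)} : x = y ↔ x.1 = y.1 ∧ x.2 = y.2 :=
  Prod.ext_iff

@[simp] theorem fst_zero : (0 : CD (n + 1)).1 = 0 := rfl
@[simp] theorem snd_zero : (0 : CD (n + 1)).2 = 0 := rfl
@[simp] theorem fst_neg (x : CD (n + 1)) : (-x).1 = -x.1 := rfl
@[simp] theorem snd_neg (x : CD (n + 1)) : (-x).2 = -x.2 := rfl

@[simp] theorem fst_conj (x : CD (n + 1)) : (conj (n + 1) x).1 = conj n x.1 := rfl
@[simp] theorem snd_conj (x : CD (n + 1)) : (conj (n + 1) x).2 = -x.2 := rfl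

@[simp] theorem fst_mul (x y : CD (n + 1)) :
    (CD.mul ε (n + 1) x y).1 = CD.mul ε n x.1 y.1 - ε (n + 1) • CD.mul ε n (conj n y.2) x.2 :=
  rfl

@[simp] theorem snd_mul (x y : CD (n + 1)) :
    (CD.mul ε (n + 1) x y).2 = CD.mul ε n y.2 x.1 + CD.mul ε n x.2 (conj n y.1) :=
  rfl

@[simp] theorem conj_zero : ∀ n, conj n (0 : CD n) = 0
  | 0 => rfl
  | n + 1 => ext (conj_zero n) neg_zero

@[simp] theorem conj_neg : ∀ n (x : CD n), conj n (-x) = -conj n x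
  | 0, _ => rfl
  | n + 1, x => ext (conj_neg n x.1) rfl

@[simp] theorem conj_add : ∀ n (x y : CD n), conj n (x + y) = conj n x + conj n y
  | 0, _, _ => rfl
  | n + 1, x, y => ext (conj_add n x.1 y.1) (neg_add _ _)

@[simp] theorem conj_sub (n : ℕ) (x y : CD n) : conj n (x - y) = conj n x - conj n y := by
  simp [sub_eq_add_neg]

@[simp] theorem conj_smul : ∀ n (r : ℝ) (x : CD n), conj n (r • x) = r • conj n x
  | 0, _, _ => rfl
  | n + 1, r, x => ext (conj_smul n r x.1) (smul_neg r x.2).symm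

@[simp] theorem conj_conj : ∀ n (x : CD n), conj n (conj n x) = x
  | 0, _ => rfl
  | n + 1, x => ext (conj_conj n x.1) (neg_neg x.2)

mutual

@[simp] protected theorem zero_mul : ∀ n (x : CD n), CD.mul ε n 0 x = 0
  | 0, x => zero_mul (show ℝ from x)
  | n + 1, x => by apply ext <;> simp [CD.zero_mul n, CD.mul_zero n]

@[simp] protected theorem mul_zero : ∀ n (x : CD n), CD.mul ε n x 0 = 0
  | 0, x => mul_zero (show ℝ from x)
  | n + 1, x => by apply ext <;> simp [CD.zero_mul n, CD.mul_zero n]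

end

mutual

@[simp] protected theorem neg_mul : ∀ n (x y : CD n), CD.mul ε n (-x) y = -CD.mul ε n x y
  | 0, x, y => neg_mul (show ℝ from x) (show ℝ from y)
  | n + 1, x, y => by apply ext <;> simp [CD.neg_mul n, CD.mul_neg n] <;> abel

@[simp] protected theorem mul_neg : ∀ n (x y : CD n), CD.mul ε n x (-y) = -CD.mul ε n x y
  | 0, x, y => mul_neg (show ℝ from x) (show ℝ from y)
  | n + 1, x, y => by apply ext <;> simp [CD.neg_mul n, CD.mul_neg n] <;> abel

end

theorem conj_mul : ∀ n (x y : CD n), conj n (CD.mul ε n x y) = CD.mul ε n (conj n y) (conj n x)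
  | 0, x, y => mul_comm (show ℝ from x) (show ℝ from y)
  | n + 1, x, y => by apply ext <;> simp [conj_mul n]

@[simp] theorem fst_basis_succ (S : Finset ℕ) :
    (basis (n + 1) S).1 = if n + 1 ∈ S then 0 else basis n S :=
  apply_ite Prod.fst _ _ _

@[simp] theorem snd_basis_succ (S : Finset ℕ) :
    (basis (n + 1) S).2 = if n + 1 ∈ S then basis n (S.erase (n + 1)) else 0 :=
  apply_ite Prod.snd _ _ _

local infixl:70 " ⬝ " => CD.mul1 _

def SignedBasis (n : ℕ) (S : Finset ℕ) (x : CD n) : Prop :=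
  x = basis n S ∨ x = -basis n S

variable {S T : Finset ℕ} {x y : CD n}

theorem signedBasis_basis : SignedBasis n S (basis n S) :=
  Or.inl rfl

theorem SignedBasis.neg (hx : SignedBasis n S x) : SignedBasis n S (-x) := by
  rcases hx with rfl | rfl
  exacts [Or.inr rfl, Or.inl (neg_neg _)]

theorem SignedBasis.eq_or_eq_neg (hx : SignedBasis n S x) (hy : SignedBasis n S y) :
    x = y ∨ x = -y := by
  rcases hx with rfl | rfl <;> rcases hy with rfl | rfl <;> simp

theorem signedBasis_succ_of_mem {x : CD (n + 1)} (h : n + 1 ∈ S) :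
    SignedBasis (n + 1) S x ↔ x.1 = 0 ∧ SignedBasis n (S.erase (n + 1)) x.2 := by
  simp only [SignedBasis, CD.ext_iff, fst_neg, snd_neg, fst_basis_succ, snd_basis_succ, h,
    if_true, neg_zero, ← and_or_left]

theorem signedBasis_succ_of_notMem {x : CD (n + 1)} (h : n + 1 ∉ S) :
    SignedBasis (n + 1) S x ↔ SignedBasis n S x.1 ∧ x.2 = 0 := by
  simp only [SignedBasis, CD.ext_iff, fst_neg, snd_neg, fst_basis_succ, snd_basis_succ, h,
    if_false, neg_zero, ← or_and_right]

theorem basis_ne_zero : ∀ n (S : Finset ℕ), basis n S ≠ 0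
  | 0, _ => one_ne_zero (α := ℝ)
  | n + 1, S => fun h => by
    by_cases hS : n + 1 ∈ S
    · exact basis_ne_zero n _ (by simpa [hS] using congrArg Prod.snd h)
    · exact basis_ne_zero n S (by simpa [hS] using congrArg Prod.fst h)

theorem SignedBasis.ne_zero (hx : SignedBasis n S x) : x ≠ 0 := by
  rcases hx with rfl | rfl <;> simp [basis_ne_zero]

theorem SignedBasis.conj (hx : SignedBasis n S x) : SignedBasis n S (conj n x) := by
  induction n generalizing S with
  | zero => exact hx
  | succ n ih =>
    by_cases hS : n + 1 ∈ S
    · rw [signedBasis_succ_of_mem hS] at hx ⊢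
      simpa [hx.1] using hx.2.neg
    · rw [signedBasis_succ_of_notMem hS] at hx ⊢
      simpa [hx.2] using ih hx.1

theorem SignedBasis.mul (hx : SignedBasis n S x) (hy : SignedBasis n T y) :
    SignedBasis n (symmDiff S T) (x ⬝ y) := by
  induction n generalizing S T with
  | zero =>
    have h : basis 0 S ⬝ basis 0 T = basis 0 (symmDiff S T) := mul_one (1 : ℝ)
    rcases hx with rfl | rfl <;> rcases hy with rfl | rfl <;> simp [SignedBasis, h]
  | succ n ih =>
    have herase := Finset.erase_symmDiff S T (n + 1)
    by_cases hS : n + 1 ∈ S <;> by_cases hT : n + 1 ∈ T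
    · rw [signedBasis_succ_of_mem hS] at hx
      rw [signedBasis_succ_of_mem hT] at hy
      have hnotMem : n + 1 ∉ symmDiff S T := by simp [Finset.mem_symmDiff, hS, hT]
      rw [signedBasis_succ_of_notMem hnotMem, ← Finset.erase_eq_of_notMem hnotMem, herase,
        symmDiff_comm]
      simpa [hx.1, hy.1] using (ih hy.2.conj hx.2).neg
    · rw [signedBasis_succ_of_mem hS] at hx
      rw [signedBasis_succ_of_notMem hT] at hy
      rw [signedBasis_succ_of_mem (by simp [Finset.mem_symmDiff, hS, hT]), herase,
        Finset.erase_eq_of_notMem hT]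
      simpa [hx.1, hy.2] using ih hx.2 hy.1.conj
    · rw [signedBasis_succ_of_notMem hS] at hx
      rw [signedBasis_succ_of_mem hT] at hy
      rw [signedBasis_succ_of_mem (by simp [Finset.mem_symmDiff, hS, hT]), herase,
        Finset.erase_eq_of_notMem hS, symmDiff_comm]
      simpa [hx.2, hy.1] using ih hy.2 hx.1
    · rw [signedBasis_succ_of_notMem hS] at hx
      rw [signedBasis_succ_of_notMem hT] at hy
      rw [signedBasis_succ_of_notMem (by simp [Finset.mem_symmDiff, hS, hT])]
      simpa [hx.2, hy.2] using ih hx.1 hy.1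

theorem IsPure.symmDiff (hS : IsPure n S) (hT : IsPure n T) (h : S ≠ T) :
    IsPure n (symmDiff S T) :=
  ⟨Finset.symmDiff_nonempty.2 h,
    Finset.symmDiff_subset_union.trans (Finset.union_subset hS.2 hT.2)⟩

theorem IsPure.of_succ (hS : IsPure (n + 1) S) (h : n + 1 ∉ S) : IsPure n S := by
  refine ⟨hS.1, fun a ha => ?_⟩
  have := hS.2 ha
  have : a ≠ n + 1 := by rintro rfl; exact h ha
  simp only [Finset.mem_Icc] at *
  omega

theorem conj_basis_of_isPure (hS : IsPure n S) : conj n (basis n S) = -basis n S := by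
  induction n generalizing S with
  | zero =>
    obtain ⟨a, ha⟩ := hS.1
    simpa using hS.2 ha
  | succ n ih =>
    by_cases h : n + 1 ∈ S <;> apply ext <;> simp [h, ih (hS.of_succ _)]

theorem SignedBasis.conj_eq_neg (hS : IsPure n S) (hx : SignedBasis n S x) : CD.conj n x = -x := by
  rcases hx with rfl | rfl <;> simp [conj_basis_of_isPure hS]

-- The four identities are proved together: each of them at level `n + 1` uses the others at `n`.
theorem basis_conj_cancel : ∀ n (S : Finset ℕ) (y : CD n),
    conj n (basis n S) ⬝ (basis n S ⬝ y) = y ∧ basis n S ⬝ (conj n (basis n S) ⬝ y) = y ∧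
      (y ⬝ basis n S) ⬝ conj n (basis n S) = y ∧ (y ⬝ conj n (basis n S)) ⬝ basis n S = y
  | 0, _, y => by
    refine ⟨?_, ?_, ?_, ?_⟩
    · exact (one_mul _).trans (one_mul (show ℝ from y))
    · exact (one_mul _).trans (one_mul (show ℝ from y))
    · exact (mul_one _).trans (mul_one (show ℝ from y))
    · exact (mul_one _).trans (mul_one (show ℝ from y))
  | n + 1, S, y => by
    by_cases h : n + 1 ∈ S <;> refine ⟨?_, ?_, ?_, ?_⟩ <;> apply ext <;>
      simp [h, conj_mul, basis_conj_cancel n]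

theorem SignedBasis.mul_mul_self_left (hS : IsPure n S) (hx : SignedBasis n S x) (y : CD n) :
    x ⬝ (x ⬝ y) = -y := by
  have h := (basis_conj_cancel n S y).1
  rw [conj_basis_of_isPure hS] at h
  rcases hx with rfl | rfl <;> simpa [neg_eq_iff_eq_neg] using h

theorem SignedBasis.mul_mul_self_right (hS : IsPure n S) (hx : SignedBasis n S x) (y : CD n) :
    (y ⬝ x) ⬝ x = -y := by
  have h := (basis_conj_cancel n S y).2.2.1
  rw [conj_basis_of_isPure hS] at h
  rcases hx with rfl | rfl <;> simpa [neg_eq_iff_eq_neg] using h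

theorem SignedBasis.mul_anticomm (hS : IsPure n S) (hT : IsPure n T) (hST : S ≠ T)
    (hx : SignedBasis n S x) (hy : SignedBasis n T y) : x ⬝ y = -(y ⬝ x) := by
  have h := (hx.mul hy).conj_eq_neg (hS.symmDiff hT hST)
  rw [conj_mul, hx.conj_eq_neg hS, hy.conj_eq_neg hT] at h
  simpa [neg_eq_iff_eq_neg] using h.symm

instance : IsAddTorsionFree (CD n) :=
  .of_isTorsionFree ℝ (CD n)

theorem assoc1_eq (x y z : CD n) : assoc1 n x y z = (x ⬝ y) ⬝ z - x ⬝ (y ⬝ z) :=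
  rfl

theorem basis_mul_assoc_eq_or_eq_neg (α β γ : Finset ℕ) :
    (basis n α ⬝ basis n β) ⬝ basis n γ = basis n α ⬝ (basis n β ⬝ basis n γ) ∨
      (basis n α ⬝ basis n β) ⬝ basis n γ = -(basis n α ⬝ (basis n β ⬝ basis n γ)) := by
  have hb : SignedBasis n α (basis n α) := signedBasis_basis
  have hc : SignedBasis n β (basis n β) := signedBasis_basis
  have hd : SignedBasis n γ (basis n γ) := signedBasis_basis
  refine ((hb.mul hc).mul hd).eq_or_eq_neg ?_
  rw [symmDiff_assoc]
  exact hb.mul (hc.mul hd)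

section Triad

variable {α β γ : Finset ℕ}

theorem IsTriad.ne_symmDiff (h : IsTriad n α β γ) : γ ≠ symmDiff α β := by
  obtain ⟨-, -, -, -, -, -, h₁, h₂⟩ := h
  rintro rfl
  rcases (signedBasis_basis (S := α)).mul (signedBasis_basis (S := β)) with h | h
  · exact h₁ h.symm
  · exact h₂ (neg_eq_iff_eq_neg.1 h.symm)

theorem IsTriad.mul_mul_eq_of_moufang (h : IsTriad n α β γ)
    (hmouf : (basis n γ ⬝ basis n α) ⬝ (basis n β ⬝ basis n γ)
      = (basis n γ ⬝ (basis n α ⬝ basis n β)) ⬝ basis n γ) :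
    (basis n α ⬝ basis n β) ⬝ (basis n γ ⬝ basis n α) = basis n β ⬝ basis n γ := by
  have hγαβ := h.ne_symmDiff
  obtain ⟨hα, hβ, hγ, hαβ, hαγ, hβγ, -, -⟩ := h
  have hb : SignedBasis n α (basis n α) := signedBasis_basis
  have hc : SignedBasis n β (basis n β) := signedBasis_basis
  have hd : SignedBasis n γ (basis n γ) := signedBasis_basis
  have hbc_ne_db : symmDiff α β ≠ symmDiff γ α := fun hEq =>
    hβγ (symmDiff_right_injective α (hEq.trans (symmDiff_comm γ α)))
  have hmouf' : (basis n γ ⬝ basis n α) ⬝ (basis n β ⬝ basis n γ) = basis n α ⬝ basis n β := by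
    rw [hmouf, hd.mul_anticomm hγ (hα.symmDiff hβ hαβ) hγαβ (hb.mul hc)]
    simp [hd.mul_mul_self_right hγ]
  calc (basis n α ⬝ basis n β) ⬝ (basis n γ ⬝ basis n α)
      = -((basis n γ ⬝ basis n α) ⬝ (basis n α ⬝ basis n β)) :=
        (hb.mul hc).mul_anticomm (hα.symmDiff hβ hαβ) (hγ.symmDiff hα hαγ.symm) hbc_ne_db
          (hd.mul hb)
    _ = basis n β ⬝ basis n γ := by
        rw [← hmouf', (hd.mul hb).mul_mul_self_left (hγ.symmDiff hα hαγ.symm), neg_neg]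

theorem IsTriad.mul_mul_mul_eq (h : IsTriad n α β γ) :
    (basis n α ⬝ (basis n β ⬝ basis n γ)) ⬝ basis n α = basis n β ⬝ basis n γ := by
  have hγαβ := h.ne_symmDiff
  obtain ⟨hα, hβ, hγ, -, -, hβγ, -, -⟩ := h
  have hb : SignedBasis n α (basis n α) := signedBasis_basis
  have hcd : SignedBasis n (symmDiff β γ) (basis n β ⬝ basis n γ) :=
    signedBasis_basis.mul signedBasis_basis
  have hα_ne : α ≠ symmDiff β γ := by
    rintro rfl
    exact hγαβ (symmDiff_symmDiff_self' _ _).symm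
  rw [hb.mul_anticomm hα (hβ.symmDiff hγ hβγ) hα_ne hcd]
  simp [hb.mul_mul_self_right hα]

end Triad

end CD

/-- For a triad `(b,c,d)` satisfying the third Moufang identity
`(d·b)·(c·d) = (d·(b·c))·d`: if `((b·c)·d)·b + (b·c)·(d·b) = 0` then `[b,c,d] ≠ 0`;
if `((b·c)·d)·b − (b·c)·(d·b) = 0` then `[b,c,d] = 0`. -/
theorem stmt10 (n : ℕ) (α β γ : Finset ℕ) (h : CD.IsTriad n α β γ)
    (b c d : CD n) (hb : b = CD.basis n α) (hc : c = CD.basis n β)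
    (hd : d = CD.basis n γ)
    (hmouf : CD.mul1 n (CD.mul1 n d b) (CD.mul1 n c d)
      = CD.mul1 n (CD.mul1 n d (CD.mul1 n b c)) d) :
    (CD.mul1 n (CD.mul1 n (CD.mul1 n b c) d) b
        + CD.mul1 n (CD.mul1 n b c) (CD.mul1 n d b) = 0 →
      CD.assoc1 n b c d ≠ 0) ∧
    (CD.mul1 n (CD.mul1 n (CD.mul1 n b c) d) b
        - CD.mul1 n (CD.mul1 n b c) (CD.mul1 n d b) = 0 →
      CD.assoc1 n b c d = 0) := by
  subst hb hc hd
  have hcd_ne : CD.mul1 n (CD.basis n β) (CD.basis n γ) ≠ 0 :=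
    (CD.signedBasis_basis.mul CD.signedBasis_basis).ne_zero
  have hbcd_ne : CD.mul1 n (CD.basis n α) (CD.mul1 n (CD.basis n β) (CD.basis n γ)) ≠ 0 :=
    (CD.signedBasis_basis.mul (CD.signedBasis_basis.mul CD.signedBasis_basis)).ne_zero
  rw [h.mul_mul_eq_of_moufang hmouf, CD.assoc1_eq]
  rcases CD.basis_mul_assoc_eq_or_eq_neg α β γ with hassoc | hassoc <;> rw [hassoc]
  · rw [h.mul_mul_mul_eq, sub_self]
    exact ⟨fun hplus => absurd (self_eq_neg.1 (add_eq_zero_iff_eq_neg.1 hplus)) hcd_ne,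
      fun _ => rfl⟩
  · simp only [CD.neg_mul, h.mul_mul_mul_eq]
    exact ⟨fun _ hzero => hbcd_ne (neg_eq_self.1 (sub_eq_zero.1 hzero)),
      fun hminus => absurd (neg_eq_self.1 (sub_eq_zero.1 hminus)) hcd_ne⟩
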